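/- Let p ≥ 1 be an integer, M_p > 0, M ≥ 0, and let f : ℝ^n → ℝ have M_p-Lipschitz p-th derivative. Fix x ∈ ℝ^n and let y be a global minimizer over ℝ^n of the function y ↦ Ω_p(f, x; y) + (M/(p+1)!) ∥y − x∥^{p+1}. Then ∥∇f(y)∥ ≤ ((M + M_p)/p!) ∥y − x∥^p. In particular, for M = p M_p one has ∥∇f(y)∥ ≤ ((p+1) M_p/p!) ∥y − x∥^p. -/

import Mathlib

/-!
At the minimiser `y` the first-order condition reads
`∇Ω_p(f,x;y) = -(M/p!) ‖y - x‖^(p-1) (y - x)`, so `‖∇Ω_p(f,x;y)‖ = (M/p!) ‖y - x‖^p`.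
By the symmetry of iterated derivatives, `∇Ω_p(f,x;·)` is the degree `p - 1` Taylor polynomial
of `∇f` at `x`, and `∇^(p-1)(∇f) = ∇^p f` is `M_p`-Lipschitz, so the Taylor remainder bound gives
`‖∇f(y) - ∇Ω_p(f,x;y)‖ ≤ (M_p/p!) ‖y - x‖^p`; the triangle inequality concludes.
The remainder bound for a `C`-Lipschitz `q`-th derivative is proved by induction on `q`: along
the segment `t ↦ x + t v`, the derivative of the degree `q + 1` remainder is the degree `q`
remainder of the derivative applied to `v`, and the induction hypothesis fences it by
`C ‖v‖^(q+2) t^(q+2) / (q+2)!`.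
-/

/-- The `p`-th order Taylor polynomial of `f` at `x`, evaluated at `y`:
`Ω_p(f, x; y) = ∑_{r=0}^p (1/r!) ∇^r f(x)[y-x, …, y-x]`. -/
noncomputable def taylorModel {n : ℕ} (p : ℕ) (f : EuclideanSpace ℝ (Fin n) → ℝ)
    (x y : EuclideanSpace ℝ (Fin n)) : ℝ :=
  ∑ r ∈ Finset.range (p + 1),
    (1 / (Nat.factorial r : ℝ)) * iteratedFDeriv ℝ r f x (fun _ => y - x)

/-- `f` is `p` times continuously differentiable with `M`-Lipschitz `p`-th derivative. -/
def HasLipschitzPthDeriv {n : ℕ} (p : ℕ) (M : ℝ) (f : EuclideanSpace ℝ (Fin n) → ℝ) : Prop :=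
  ContDiff ℝ p f ∧
    ∀ x y : EuclideanSpace ℝ (Fin n),
      ‖iteratedFDeriv ℝ p f x - iteratedFDeriv ℝ p f y‖ ≤ M * ‖x - y‖

open Finset Fin Function
open scoped Nat

universe u

section TaylorSum

-- `E` and `F` share a universe because the inductions below replace `F` by `E →L[ℝ] F`.
variable {E F : Type u} [NormedAddCommGroup E] [NormedSpace ℝ E]
  [NormedAddCommGroup F] [NormedSpace ℝ F]

theorem iteratedFDeriv_snoc_snoc_comm {k : ℕ} {g : E → F} (hg : ContDiff ℝ (k + 2) g)
    (x : E) (m : Fin k → E) (a b : E) :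
    iteratedFDeriv ℝ (k + 2) g x (snoc (snoc m a) b)
      = iteratedFDeriv ℝ (k + 2) g x (snoc (snoc m b) a) := by
  have hg₂ : ContDiff ℝ k (fderiv ℝ (fderiv ℝ g)) :=
    (hg.fderiv_right (m := k + 1) (by norm_cast)).fderiv_right (by norm_cast)
  have hsplit : ∀ c d : E, iteratedFDeriv ℝ (k + 2) g x (snoc (snoc m c) d)
      = iteratedFDeriv ℝ k (fun z => fderiv ℝ (fderiv ℝ g) z c d) x m := by
    intro c d
    rw [iteratedFDeriv_clm_apply_const_apply (hg₂.clm_apply contDiff_const) le_rfl,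
      iteratedFDeriv_clm_apply_const_apply hg₂ le_rfl, iteratedFDeriv_succ_apply_right,
      iteratedFDeriv_succ_apply_right]
    simp only [init_snoc, snoc_last]
  have hsymm : (fun z => fderiv ℝ (fderiv ℝ g) z a b) = fun z => fderiv ℝ (fderiv ℝ g) z b a :=
    funext fun z => (hg.contDiffAt.isSymmSndFDerivAt (by simp)) a b
  rw [hsplit, hsplit, hsymm]

theorem iteratedFDeriv_update_const_eq_snoc {k : ℕ} {g : E → F} (hg : ContDiff ℝ (k + 1) g)
    (x v w : E) (i : Fin (k + 1)) :
    iteratedFDeriv ℝ (k + 1) g x (update (fun _ => v) i w)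
      = iteratedFDeriv ℝ (k + 1) g x (snoc (fun _ => v) w) := by
  induction k generalizing F with
  | zero =>
    congr 1
    funext j
    fin_cases i; fin_cases j
    rfl
  | succ k ih =>
    induction i using lastCases with
    | last =>
      congr 1
      ext j
      cases j using lastCases <;> simp
    | cast j =>
      have hg' : ContDiff ℝ (k + 1) (fderiv ℝ g) := hg.fderiv_right (by norm_cast)
      calc iteratedFDeriv ℝ (k + 2) g x (update (fun _ => v) j.castSucc w)
          = iteratedFDeriv ℝ (k + 1) (fderiv ℝ g) x (update (fun _ => v) j w) v := by
            rw [iteratedFDeriv_succ_apply_right, init_update_castSucc,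
              update_of_ne (castSucc_lt_last j).ne']
            rfl
        _ = iteratedFDeriv ℝ (k + 1) (fderiv ℝ g) x (snoc (fun _ => v) w) v := by
            rw [ih hg' j]
        _ = iteratedFDeriv ℝ (k + 2) g x (snoc (snoc (fun _ => v) w) v) := by
            rw [iteratedFDeriv_succ_apply_right (f := g), init_snoc, snoc_last]
        _ = iteratedFDeriv ℝ (k + 2) g x (snoc (snoc (fun _ => v) v) w) :=
            iteratedFDeriv_snoc_snoc_comm hg x _ w v
        _ = iteratedFDeriv ℝ (k + 2) g x (snoc (fun _ => v) w) := by
            congr 2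
            ext j
            cases j using lastCases <;> simp

theorem hasFDerivAt_iteratedFDeriv_diag {k : ℕ} {g : E → F} (hg : ContDiff ℝ (k + 1) g)
    (x v : E) :
    HasFDerivAt (fun w => iteratedFDeriv ℝ (k + 1) g x (fun _ => w))
      ((k + 1) • iteratedFDeriv ℝ k (fderiv ℝ g) x (fun _ => v)) v := by
  classical
  refine (HasFDerivAt.multilinear_comp (iteratedFDeriv ℝ (k + 1) g x)
    (fun _ => hasFDerivAt_id v)).congr_fderiv ?_
  ext w
  simp [iteratedFDeriv_update_const_eq_snoc hg, iteratedFDeriv_succ_apply_right (f := g)]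

/-- The degree `q` Taylor polynomial of `g` at `x`, evaluated at the point `x + v`. -/
noncomputable def taylorSum (q : ℕ) (g : E → F) (x v : E) : F :=
  ∑ r ∈ range (q + 1), (r ! : ℝ)⁻¹ • iteratedFDeriv ℝ r g x (fun _ => v)

theorem taylorSum_succ_eq_add (q : ℕ) (g : E → F) (x v : E) :
    taylorSum (q + 1) g x v = g x +
      ∑ r ∈ range (q + 1), ((r + 1)! : ℝ)⁻¹ • iteratedFDeriv ℝ (r + 1) g x (fun _ => v) := by
  rw [taylorSum, sum_range_succ', add_comm]
  simp

theorem taylorSum_zero_right (q : ℕ) (g : E → F) (x : E) : taylorSum q g x 0 = g x := by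
  cases q with
  | zero => simp [taylorSum]
  | succ q =>
    rw [taylorSum_succ_eq_add, add_eq_left]
    exact sum_eq_zero fun r _ => by rw [ContinuousMultilinearMap.map_coord_zero _ 0 rfl, smul_zero]

theorem hasFDerivAt_taylorSum {q : ℕ} {g : E → F} (hg : ContDiff ℝ (q + 1) g) (x v : E) :
    HasFDerivAt (taylorSum (q + 1) g x) (taylorSum q (fderiv ℝ g) x v) v := by
  have hterm : ∀ r ∈ range (q + 1), HasFDerivAt
      (fun w => ((r + 1)! : ℝ)⁻¹ • iteratedFDeriv ℝ (r + 1) g x (fun _ => w))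
      ((r ! : ℝ)⁻¹ • iteratedFDeriv ℝ r (fderiv ℝ g) x (fun _ => v)) v := by
    intro r hr
    have hgr : ContDiff ℝ (r + 1) g := hg.of_le (by norm_cast; simpa using hr)
    refine ((hasFDerivAt_iteratedFDeriv_diag hgr x v).const_smul _).congr_fderiv ?_
    rw [← Nat.cast_smul_eq_nsmul ℝ, smul_smul, Nat.factorial_succ, Nat.cast_mul]
    congr 1
    field_simp
  rw [show taylorSum (q + 1) g x = _ from funext (taylorSum_succ_eq_add q g x)]
  exact (HasFDerivAt.fun_sum hterm).const_add (g x)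

theorem hasDerivAt_sub_taylorSum_smul {q : ℕ} {g : E → F} (hg : ContDiff ℝ (q + 1) g)
    (x v : E) (t : ℝ) :
    HasDerivAt (fun t : ℝ => g (x + t • v) - taylorSum (q + 1) g x (t • v))
      ((fderiv ℝ g (x + t • v) - taylorSum q (fderiv ℝ g) x (t • v)) v) t := by
  have hline : HasDerivAt (fun s : ℝ => s • v) v t := by
    simpa using (hasDerivAt_id t).smul_const v
  have hg_line := ((hg.differentiable (by simp)) (x + t • v)).hasFDerivAt.comp_hasDerivAt t
    (hline.const_add x)
  have htaylor_line := (hasFDerivAt_taylorSum hg x (t • v)).comp_hasDerivAt t hline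
  exact hg_line.sub htaylor_line

theorem norm_iteratedFDeriv_fderiv_sub (q : ℕ) (g : E → F) (a b : E) :
    ‖iteratedFDeriv ℝ q (fderiv ℝ g) a - iteratedFDeriv ℝ q (fderiv ℝ g) b‖
      = ‖iteratedFDeriv ℝ (q + 1) g a - iteratedFDeriv ℝ (q + 1) g b‖ := by
  rw [iteratedFDeriv_succ_eq_comp_right, iteratedFDeriv_succ_eq_comp_right, comp_apply,
    comp_apply, ← LinearIsometryEquiv.map_sub, LinearIsometryEquiv.norm_map]

theorem norm_sub_taylorSum_le {q : ℕ} {g : E → F} {C : ℝ} (hg : ContDiff ℝ q g)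
    (hlip : ∀ a b, ‖iteratedFDeriv ℝ q g a - iteratedFDeriv ℝ q g b‖ ≤ C * ‖a - b‖) (x v : E) :
    ‖g (x + v) - taylorSum q g x v‖ ≤ C / (q + 1)! * ‖v‖ ^ (q + 1) := by
  induction q generalizing F v with
  | zero =>
    have h := hlip (x + v) x
    simp only [iteratedFDeriv_zero_eq_comp, comp_apply, ← LinearIsometryEquiv.map_sub,
      LinearIsometryEquiv.norm_map, add_sub_cancel_left] at h
    simpa [taylorSum] using h
  | succ q ih =>
    have hDg : ContDiff ℝ q (fderiv ℝ g) := hg.fderiv_right (by norm_cast)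
    have hDg_lip : ∀ a b, ‖iteratedFDeriv ℝ q (fderiv ℝ g) a - iteratedFDeriv ℝ q (fderiv ℝ g) b‖
        ≤ C * ‖a - b‖ := fun a b => (norm_iteratedFDeriv_fderiv_sub q g a b).trans_le (hlip a b)
    have hderiv_le : ∀ t ∈ Set.Ico (0 : ℝ) 1,
        ‖(fderiv ℝ g (x + t • v) - taylorSum q (fderiv ℝ g) x (t • v)) v‖
          ≤ C / (q + 1)! * ‖v‖ ^ (q + 2) * t ^ (q + 1) := by
      rintro t ⟨ht, -⟩
      calc _ ≤ ‖fderiv ℝ g (x + t • v) - taylorSum q (fderiv ℝ g) x (t • v)‖ * ‖v‖ :=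
            ContinuousLinearMap.le_opNorm _ _
        _ ≤ C / (q + 1)! * ‖t • v‖ ^ (q + 1) * ‖v‖ := by gcongr; exact ih hDg hDg_lip (t • v)
        _ = C / (q + 1)! * ‖v‖ ^ (q + 2) * t ^ (q + 1) := by
            rw [norm_smul, Real.norm_of_nonneg ht]; ring
    have hfence : ∀ t, HasDerivAt (fun t => C / (q + 2)! * ‖v‖ ^ (q + 2) * t ^ (q + 2))
        (C / (q + 1)! * ‖v‖ ^ (q + 2) * t ^ (q + 1)) t := by
      intro t
      refine ((hasDerivAt_pow (q + 2) t).const_mul _).congr_deriv ?_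
      rw [Nat.factorial_succ (q + 1)]
      push_cast
      field_simp
      ring
    have hR := hasDerivAt_sub_taylorSum_smul (by exact_mod_cast hg) x v
    have hR₀ : ‖g (x + (0 : ℝ) • v) - taylorSum (q + 1) g x ((0 : ℝ) • v)‖
        ≤ C / (q + 2)! * ‖v‖ ^ (q + 2) * 0 ^ (q + 2) := by
      simp [taylorSum_zero_right]
    simpa using image_norm_le_of_norm_deriv_right_le_deriv_boundary
      (fun t _ => (hR t).continuousAt.continuousWithinAt) (fun t _ => (hR t).hasDerivWithinAt)
      hR₀ hfence hderiv_le (Set.right_mem_Icc.2 zero_le_one)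

theorem norm_fderiv_sub_taylorSum_le {q : ℕ} {g : E → F} {C : ℝ} (hg : ContDiff ℝ (q + 1) g)
    (hlip : ∀ a b, ‖iteratedFDeriv ℝ (q + 1) g a - iteratedFDeriv ℝ (q + 1) g b‖ ≤ C * ‖a - b‖)
    (x v : E) :
    ‖fderiv ℝ g (x + v) - taylorSum q (fderiv ℝ g) x v‖ ≤ C / (q + 1)! * ‖v‖ ^ (q + 1) :=
  norm_sub_taylorSum_le (hg.fderiv_right (by norm_cast))
    (fun a b => (norm_iteratedFDeriv_fderiv_sub q g a b).trans_le (hlip a b)) x v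

end TaylorSum

theorem exists_hasFDerivAt_norm_sub_pow {E : Type*} [NormedAddCommGroup E]
    [InnerProductSpace ℝ E] (x y : E) (k : ℕ) :
    ∃ ρ : E →L[ℝ] ℝ, HasFDerivAt (fun z => ‖z - x‖ ^ (k + 2)) ρ y ∧
      ‖ρ‖ = (k + 2) * ‖y - x‖ ^ (k + 1) := by
  have hk : (1 : ℝ) < k + 2 := by linarith [(k.cast_nonneg : (0 : ℝ) ≤ k)]
  refine ⟨fderiv ℝ (fun z : E => ‖z‖ ^ ((k : ℝ) + 2)) (y - x), ?_, ?_⟩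
  · have hpow : (fun z : E => ‖z - x‖ ^ (k + 2)) = fun z => ‖z - x‖ ^ ((k : ℝ) + 2) := by
      ext z
      norm_cast
    rw [hpow]
    exact (hasFDerivAt_comp_sub x).2 (differentiable_norm_rpow hk (y - x)).hasFDerivAt
  · rw [norm_fderiv_norm_id_rpow _ hk, show (k : ℝ) + 2 - 1 = (k + 1 : ℕ) by push_cast; ring,
      Real.rpow_natCast]

theorem norm_eq_of_hasFDerivAt_of_isMinOn_add_norm_sub_pow {E : Type*} [NormedAddCommGroup E]
    [InnerProductSpace ℝ E] {h : E → ℝ} {T : E →L[ℝ] ℝ} {c : ℝ} {x y : E} {k : ℕ}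
    (hh : HasFDerivAt h T y) (hc : 0 ≤ c)
    (hy : IsMinOn (fun z => h z + c * ‖z - x‖ ^ (k + 2)) Set.univ y) :
    ‖T‖ = c * (k + 2) * ‖y - x‖ ^ (k + 1) := by
  obtain ⟨ρ, hρ, hρ_norm⟩ := exists_hasFDerivAt_norm_sub_pow x y k
  have hT : T = -(c • ρ) := eq_neg_of_add_eq_zero_left <|
    (hy.isLocalMin Filter.univ_mem).hasFDerivAt_eq_zero (hh.add (hρ.const_mul c))
  rw [hT, norm_neg, norm_smul, hρ_norm, Real.norm_of_nonneg hc, mul_assoc]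

theorem taylorModel_eq_taylorSum {n : ℕ} (p : ℕ) (f : EuclideanSpace ℝ (Fin n) → ℝ)
    (x : EuclideanSpace ℝ (Fin n)) : taylorModel p f x = fun y => taylorSum p f x (y - x) := by
  ext y
  simp [taylorModel, taylorSum]

theorem tensor_step_gradient_bound {n : ℕ} (p : ℕ) (hp : 1 ≤ p) (Mp M : ℝ)
    (hM : 0 ≤ M)
    (f : EuclideanSpace ℝ (Fin n) → ℝ) (hlip : HasLipschitzPthDeriv p Mp f)
    (x y : EuclideanSpace ℝ (Fin n))
    (hy : IsMinOn (fun z => taylorModel p f x z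
        + (M / (Nat.factorial (p + 1) : ℝ)) * ‖z - x‖ ^ (p + 1)) Set.univ y) :
    ‖gradient f y‖ ≤ ((M + Mp) / (Nat.factorial p : ℝ)) * ‖y - x‖ ^ p ∧
      (M = (p : ℝ) * Mp →
        ‖gradient f y‖ ≤ (((p : ℝ) + 1) * Mp / (Nat.factorial p : ℝ)) * ‖y - x‖ ^ p) := by
  obtain ⟨hf, hf_lip⟩ := hlip
  obtain ⟨q, rfl⟩ : ∃ q, p = q + 1 := ⟨p - 1, by omega⟩
  set T := taylorSum q (fderiv ℝ f) x (y - x)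
  have hmodel : HasFDerivAt (taylorModel (q + 1) f x) T y := by
    rw [taylorModel_eq_taylorSum]
    exact (hasFDerivAt_comp_sub x).2 (hasFDerivAt_taylorSum (by exact_mod_cast hf) x (y - x))
  have hT : ‖T‖ = M / (q + 1)! * ‖y - x‖ ^ (q + 1) := by
    rw [norm_eq_of_hasFDerivAt_of_isMinOn_add_norm_sub_pow hmodel (by positivity) hy,
      Nat.factorial_succ (q + 1)]
    push_cast
    field_simp
    ring
  have hrem := norm_fderiv_sub_taylorSum_le (by exact_mod_cast hf) hf_lip x (y - x)
  rw [add_sub_cancel] at hrem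
  have hgrad : ‖gradient f y‖ ≤ (M + Mp) / (q + 1)! * ‖y - x‖ ^ (q + 1) := calc
    ‖gradient f y‖ = ‖fderiv ℝ f y‖ := by simp [gradient]
    _ ≤ ‖fderiv ℝ f y - T‖ + ‖T‖ := norm_le_norm_sub_add _ _
    _ ≤ Mp / (q + 1)! * ‖y - x‖ ^ (q + 1) + M / (q + 1)! * ‖y - x‖ ^ (q + 1) :=
        add_le_add hrem hT.le
    _ = (M + Mp) / (q + 1)! * ‖y - x‖ ^ (q + 1) := by ring
  refine ⟨hgrad, fun hM_eq => ?_⟩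
  convert hgrad using 3
  rw [hM_eq]
  push_cast
  ring
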